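/- arXiv:1909.06898 — 4 statements merged into one kernel-verified Lean document; each statement's English description precedes it below -/
import Mathlib

section
/- For every operator L ∈ A and all integers k, ℓ, one has φ_{λ,μ}(L S_x^k S_y^ℓ) = φ_{λ,μ}(L) · φ_{λ,μ}(S_x^k S_y^ℓ). -/
open Polynomial BigOperators

noncomputable section

/-- The shift automorphism `X ↦ X + 1` of a polynomial ring. -/
def shiftPoly (A : Type*) [CommRing A] : Polynomial A ≃ₐ[A] Polynomial A :=
  AlgEquiv.ofAlgHom (aeval (X + 1)) (aeval (X - 1))
    (by apply algHom_ext; simp) (by apply algHom_ext; simp)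

variable (K : Type*) [Field K] [CharZero K]

/-- `K[x,y]` modelled as `K[x][y]`: the inner variable is `x`, the outer one is `y`. -/
abbrev Rxy := Polynomial (Polynomial K)

/-- The rational function field `K(x,y)`, as the fraction field of `K[x][y]`. -/
abbrev Fxy := FractionRing (Rxy K)

/-- The shift `x ↦ x + 1` on `K[x]`. -/
def σxK : RingAut (Polynomial K) := (shiftPoly K).toRingEquiv

/-- The shift `x ↦ x + 1` on `K[x,y]`. -/
def σxR : RingAut (Rxy K) := mapEquiv (shiftPoly K).toRingEquiv

/-- The shift `y ↦ y + 1` on `K[x,y]`. -/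
def σyR : RingAut (Rxy K) := (shiftPoly (Polynomial K)).toRingEquiv

/-- The shift `σ_x` on `K(x,y)`. -/
def σxF : RingAut (Fxy K) := IsFractionRing.ringEquivOfRingEquiv (σxR K)

/-- The shift `σ_y` on `K(x,y)`. -/
def σyF : RingAut (Fxy K) := IsFractionRing.ringEquivOfRingEquiv (σyR K)

/-- The canonical map `K[x,y] → K(x,y)`. -/
def ι₀ : Rxy K →+* Fxy K := algebraMap (Rxy K) (Fxy K)

/-- The canonical map `K[x] → K(x,y)`. -/
def ιx₀ : Polynomial K →+* Fxy K := (ι₀ K).comp (Polynomial.C : Polynomial K →+* Rxy K)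

/-- The canonical map `K → K(x,y)`. -/
def ιK : K →+* Fxy K := (ιx₀ K).comp (Polynomial.C : K →+* Polynomial K)

/-- The element `x` of `K(x,y)`. -/
def xF : Fxy K := ιx₀ K X

/-- The element `y` of `K(x,y)`. -/
def yF : Fxy K := ι₀ K X

/-- A rational function `f ∈ K(x,y)` is `σ_y`-summable if `f = σ_y(g) - g`
for some `g ∈ K(x,y)`. -/
def IsSummableY (f : Fxy K) : Prop := ∃ g : Fxy K, f = σyF K g - g

/-- The Laurent operator ring `A = K(x,y)[S_x,S_y,S_x⁻¹,S_y⁻¹]`, an operator being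
recorded by its (finitely supported) family of coefficients `a_{ij}` in
`L = Σ a_{ij} S_x^i S_y^j`. -/
abbrev OpA := (ℤ × ℤ) →₀ Fxy K

/-- The subring `A_{λ,μ} = K(x,y)[S_{λ,μ}, S_{λ,μ}⁻¹]`, an operator being recorded by its
(finitely supported) family of coefficients `a_i` in `M = Σ a_i S_{λ,μ}^i`. -/
abbrev OpB := ℤ →₀ Fxy K

/-- The automorphism `σ_x^i σ_y^j` of `K(x,y)` attached to the monomial `S_x^i S_y^j`. -/
def σv (v : ℤ × ℤ) : RingAut (Fxy K) := σxF K ^ v.1 * σyF K ^ v.2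

/-- Multiplication in `A`, determined by the commutation rule `S_x^i S_y^j f
= σ_x^i σ_y^j (f) S_x^i S_y^j`. -/
def mulA (L M : OpA K) : OpA K :=
  L.sum fun p a => M.sum fun q b => Finsupp.single (p + q) (a * σv K p b)

/-- The application of an operator `L = Σ a_{ij} S_x^i S_y^j ∈ A` to a rational function. -/
def applyA (L : OpA K) (f : Fxy K) : Fxy K := L.sum fun p a => a * σv K p f

/-- The operator `S_y - 1 ∈ A`. -/
def SyOne : OpA K :=
  Finsupp.single ((0 : ℤ), (1 : ℤ)) (1 : Fxy K) - Finsupp.single ((0 : ℤ), (0 : ℤ)) (1 : Fxy K)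

section TypeLamMu

/- `α`, `β` are the Bézout cofactors for the integer-linear type `(λ, μ)`,
so that `S_{λ,μ} = S_x^α S_y^β`. -/
variable (α β : ℤ)

/-- The automorphism `σ_{λ,μ} = σ_x^α σ_y^β` of `K(x,y)` attached to `S_{λ,μ} = S_x^α S_y^β`. -/
def τF : RingAut (Fxy K) := σxF K ^ α * σyF K ^ β

/-- Multiplication in `A_{λ,μ}`. -/
def mulB (L M : OpB K) : OpB K :=
  L.sum fun i a => M.sum fun j b => Finsupp.single (i + j) (a * (τF K α β ^ i) b)

/-- The application of an operator `M = Σ a_i S_{λ,μ}^i ∈ A_{λ,μ}` to a rational function. -/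
def applyB (M : OpB K) (f : Fxy K) : Fxy K := M.sum fun i a => a * (τF K α β ^ i) f

/-- The inclusion `A_{λ,μ} ⊆ A`, sending `S_{λ,μ}^k` to `S_x^{kα} S_y^{kβ}`. -/
def ιB (M : OpB K) : OpA K := Finsupp.mapDomain (fun k : ℤ => (k * α, k * β)) M

/-- The left `K(x,y)`-linear map `φ_{λ,μ} : A → A_{λ,μ}`,
sending `Σ a_{ij} S_x^i S_y^j` to `Σ a_{ij} S_{λ,μ}^{iλ+jμ}`. -/
def φB (lam μ : ℤ) (L : OpA K) : OpB K :=
  Finsupp.mapDomain (fun p : ℤ × ℤ => p.1 * lam + p.2 * μ) L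

/-- The left scalar multiplication `L ⊙ M = φ_{λ,μ}(L M)` of `L ∈ A` on `M ∈ A_{λ,μ}`. -/
def odot (lam μ : ℤ) (L : OpA K) (M : OpB K) : OpB K :=
  φB K lam μ (mulA K L (ιB K α β M))

end TypeLamMu

/-- The lowest order `lord(M)` of a (nonzero) operator `M ∈ A_{λ,μ}`. -/
def lord (M : OpB K) : ℤ := WithTop.untopD 0 (M.support.min)

/-- The highest order `hord(M)` of a (nonzero) operator `M ∈ A_{λ,μ}`. -/
def hord (M : OpB K) : ℤ := WithBot.unbotD 0 (M.support.max)

/-- The inclusion `K(x,y)[S_y, S_y⁻¹] ⊆ A`. -/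
def ιy (L : ℤ →₀ Fxy K) : OpA K := Finsupp.mapDomain (fun j : ℤ => ((0 : ℤ), j)) L

/-- The inclusion `K[x][S_x] ⊆ A`, for operators with polynomial coefficients
supported on nonnegative powers of `S_x`. -/
def ιxOp (L : ℕ →₀ Polynomial K) : OpA K :=
  L.sum fun ℓ c => Finsupp.single ((ℓ : ℤ), (0 : ℤ)) (ιx₀ K c)

/-- A nonzero operator `L = Σ c_ℓ S_x^ℓ ∈ K[x][S_x]` is a telescoper for `f ∈ K(x,y)`
if `L(f)` is `σ_y`-summable. -/
def IsTelescoper (L : ℕ →₀ Polynomial K) (f : Fxy K) : Prop :=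
  L ≠ 0 ∧ IsSummableY K (applyA K (ιxOp K L) f)

/-- The degree in `x` of a polynomial in `K[x,y] = K[x][y]`. -/
def degX (r : Rxy K) : ℕ := r.support.sup fun n => (r.coeff n).natDegree

/-- The total degree in `x, y` of a polynomial in `K[x,y] = K[x][y]`. -/
def degXY (r : Rxy K) : ℕ := r.support.sup fun n => n + (r.coeff n).natDegree

end

section OperatorProducts

variable {K : Type*} [Field K]

theorem mulA_add_left (L M N : OpA K) :
    mulA K (L + M) N = mulA K L N + mulA K M N :=
  Finsupp.sum_add_index' (fun _ => by simp) fun _ a b => by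
    simp only [add_mul, Finsupp.single_add, Finsupp.sum_add]

theorem mulA_single_single (p q : ℤ × ℤ) (a b : Fxy K) :
    mulA K (Finsupp.single p a) (Finsupp.single q b) =
      Finsupp.single (p + q) (a * σv K p b) := by
  simp [mulA]

theorem mulB_add_left (α β : ℤ) (L M N : OpB K) :
    mulB K α β (L + M) N = mulB K α β L N + mulB K α β M N :=
  Finsupp.sum_add_index' (fun _ => by simp) fun _ a b => by
    simp only [add_mul, Finsupp.single_add, Finsupp.sum_add]

theorem mulB_single_single (α β i j : ℤ) (a b : Fxy K) :
    mulB K α β (Finsupp.single i a) (Finsupp.single j b) =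
      Finsupp.single (i + j) (a * (τF K α β ^ i) b) := by
  simp [mulB]

theorem φB_add (lam μ : ℤ) (L M : OpA K) :
    φB K lam μ (L + M) = φB K lam μ L + φB K lam μ M :=
  Finsupp.mapDomain_add

theorem φB_single (lam μ : ℤ) (p : ℤ × ℤ) (a : Fxy K) :
    φB K lam μ (Finsupp.single p a) = Finsupp.single (p.1 * lam + p.2 * μ) a :=
  Finsupp.mapDomain_single

end OperatorProducts

theorem statement1_general (K : Type*) [Field K]
    (lam μ α β : ℤ)
    (L : OpA K) (k ℓ : ℤ) :
    φB K lam μ (mulA K L (Finsupp.single (k, ℓ) (1 : Fxy K))) =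
      mulB K α β (φB K lam μ L)
        (φB K lam μ (Finsupp.single (k, ℓ) (1 : Fxy K))) := by
  induction L using Finsupp.induction_linear with
  | zero => simp [mulA, mulB, φB]
  | add L M hL hM => rw [mulA_add_left, φB_add, φB_add, mulB_add_left, hL, hM]
  | single p a =>
    rw [mulA_single_single, φB_single, φB_single, φB_single, mulB_single_single, map_one,
      map_one, Prod.fst_add, Prod.snd_add, add_mul, add_mul, add_add_add_comm]

/-- Lemma `LEM:prod`.
For every operator `L ∈ A` and all integers `k, ℓ`, one has
`φ_{λ,μ}(L S_x^k S_y^ℓ) = φ_{λ,μ}(L) ⬝ φ_{λ,μ}(S_x^k S_y^ℓ)`,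
the product on the right being taken in `A_{λ,μ}`. -/
theorem statement1 (K : Type*) [Field K] [CharZero K]
    (lam μ α β : ℤ) (hμ : 0 < μ) (hcop : IsCoprime lam μ)
    (hbez : α * lam + β * μ = 1) (hα : 0 ≤ α ∧ α < μ)
    (hβ : lam ≠ 0 → |β| ≤ |lam|) (hβ0 : lam = 0 → α = 0 ∧ β = 1)
    (L : OpA K) (k ℓ : ℤ) :
    φB K lam μ (mulA K L (Finsupp.single (k, ℓ) (1 : Fxy K))) =
      mulB K α β (φB K lam μ L)
        (φB K lam μ (Finsupp.single (k, ℓ) (1 : Fxy K))) :=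
  statement1_general K lam μ α β L k ℓ
end

section
/- Let L ∈ K(x,y)[S_y, S_y^{-1}] and M ∈ A_{λ,μ} be nonzero operators. Then φ_{λ,μ}(L) is nonzero, L ⊙ M is nonzero, and lord(L ⊙ M) = lord(φ_{λ,μ}(L)) + lord(M) and hord(L ⊙ M) = hord(φ_{λ,μ}(L)) + hord(M). -/
open Polynomial BigOperators

/-! The coefficients of `L ⊙ M` are those of a skew product of Laurent series in
`S_{λ,μ}` in which `S_y^j` becomes `S_{λ,μ}^{jμ}`. As `j ↦ jμ` is strictly increasing, the
lowest (highest) exponent `jμ + k` arises from exactly one pair `(j, k)`, namely the lowest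
(highest) exponents of `L` and `M`, and its coefficient `ℓ_j σ_y^j(m_k)` is nonzero because
`σ_y^j` is injective. -/

open Finsupp

section SkewConvolution

variable {κ ι R : Type*} [AddCommMonoid ι] [Ring R]

/-- `skewConvolution e τ f g = Σ_{j,k} f_j τ_j(g_k) T^{e(j)+k}`: the product of
`Σ_j f_j T^{e(j)}` and `Σ_k g_k T^k` in a ring where `T^{e(j)}` acts on coefficients by `τ_j`. -/
noncomputable def skewConvolution (e : κ → ι) (τ : κ → R ≃+* R) (f : κ →₀ R) (g : ι →₀ R) :
    ι →₀ R :=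
  f.sum fun j c => g.sum fun k d => single (e j + k) (c * τ j d)

variable {e : κ → ι} {τ : κ → R ≃+* R} {f : κ →₀ R} {g : ι →₀ R}

theorem exists_of_mem_support_skewConvolution {t : ι}
    (ht : t ∈ (skewConvolution e τ f g).support) :
    ∃ j ∈ f.support, ∃ k ∈ g.support, t = e j + k := by
  classical
  obtain ⟨j, hj, ht⟩ := Finset.mem_biUnion.mp (support_sum ht)
  obtain ⟨k, hk, ht⟩ := Finset.mem_biUnion.mp (support_sum ht)
  exact ⟨j, hj, k, hk, Finset.mem_singleton.mp (support_single_subset ht)⟩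

theorem skewConvolution_apply_of_unique {j : κ} {k : ι} (hj : j ∈ f.support)
    (hk : k ∈ g.support)
    (huniq : ∀ j' ∈ f.support, ∀ k' ∈ g.support, e j' + k' = e j + k → j' = j ∧ k' = k) :
    skewConvolution e τ f g (e j + k) = f j * τ j (g k) := by
  classical
  simp only [skewConvolution, Finsupp.sum, finsetSum_apply, single_apply]
  rw [Finset.sum_eq_single_of_mem j hj, Finset.sum_eq_single_of_mem k hk, if_pos rfl]
  · exact fun k' hk' hne => if_neg fun h => hne (huniq j hj k' hk' h).2
  · exact fun j' hj' hne => Finset.sum_eq_zero fun k' hk' =>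
      if_neg fun h => hne (huniq j' hj' k' hk' h).1

variable [LinearOrder κ] [LinearOrder ι] [IsOrderedCancelAddMonoid ι]

theorem StrictMono.eq_and_eq_of_add_le_add (he : StrictMono e) {j j' : κ} {k k' : ι}
    (hj : j ≤ j') (hk : k ≤ k') (h : e j' + k' ≤ e j + k) : j' = j ∧ k' = k := by
  rcases hj.eq_or_lt with rfl | hlt
  · exact ⟨rfl, le_antisymm (le_of_add_le_add_left h) hk⟩
  · exact absurd h (add_lt_add_of_lt_of_le (he hlt) hk).not_ge

variable [NoZeroDivisors R]

theorem min_support_skewConvolution (he : StrictMono e) (hf : f.support.Nonempty)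
    (hg : g.support.Nonempty) :
    (skewConvolution e τ f g).support.min = ↑(e (f.support.min' hf) + g.support.min' hg) := by
  set j₀ := f.support.min' hf
  set k₀ := g.support.min' hg
  have hle : ∀ j ∈ f.support, ∀ k ∈ g.support, e j₀ + k₀ ≤ e j + k := fun j hj k hk =>
    add_le_add (he.monotone (f.support.min'_le j hj)) (g.support.min'_le k hk)
  have hcoeff : skewConvolution e τ f g (e j₀ + k₀) = f j₀ * τ j₀ (g k₀) :=
    skewConvolution_apply_of_unique (f.support.min'_mem hf) (g.support.min'_mem hg)
      fun j hj k hk h => he.eq_and_eq_of_add_le_add (f.support.min'_le j hj)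
        (g.support.min'_le k hk) h.le
  have hmem : e j₀ + k₀ ∈ (skewConvolution e τ f g).support := by
    rw [Finsupp.mem_support_iff, hcoeff]
    exact mul_ne_zero (mem_support_iff.mp (f.support.min'_mem hf))
      ((τ j₀).map_ne_zero_iff.mpr (mem_support_iff.mp (g.support.min'_mem hg)))
  refine le_antisymm (Finset.min_le hmem) (Finset.le_min fun t ht => ?_)
  obtain ⟨j, hj, k, hk, rfl⟩ := exists_of_mem_support_skewConvolution ht
  exact WithTop.coe_le_coe.mpr (hle j hj k hk)

theorem max_support_skewConvolution (he : StrictMono e) (hf : f.support.Nonempty)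
    (hg : g.support.Nonempty) :
    (skewConvolution e τ f g).support.max = ↑(e (f.support.max' hf) + g.support.max' hg) := by
  set j₁ := f.support.max' hf
  set k₁ := g.support.max' hg
  have hle : ∀ j ∈ f.support, ∀ k ∈ g.support, e j + k ≤ e j₁ + k₁ := fun j hj k hk =>
    add_le_add (he.monotone (f.support.le_max' j hj)) (g.support.le_max' k hk)
  have hcoeff : skewConvolution e τ f g (e j₁ + k₁) = f j₁ * τ j₁ (g k₁) :=
    skewConvolution_apply_of_unique (f.support.max'_mem hf) (g.support.max'_mem hg)
      fun j hj k hk h => (he.eq_and_eq_of_add_le_add (f.support.le_max' j hj)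
        (g.support.le_max' k hk) h.ge).imp Eq.symm Eq.symm
  have hmem : e j₁ + k₁ ∈ (skewConvolution e τ f g).support := by
    rw [Finsupp.mem_support_iff, hcoeff]
    exact mul_ne_zero (mem_support_iff.mp (f.support.max'_mem hf))
      ((τ j₁).map_ne_zero_iff.mpr (mem_support_iff.mp (g.support.max'_mem hg)))
  refine le_antisymm (Finset.max_le fun t ht => ?_) (Finset.le_max hmem)
  obtain ⟨j, hj, k, hk, rfl⟩ := exists_of_mem_support_skewConvolution ht
  exact WithBot.coe_le_coe.mpr (hle j hj k hk)

end SkewConvolution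

theorem Finsupp.min_support_mapDomain_of_strictMono {κ ι M : Type*} [LinearOrder κ]
    [LinearOrder ι] [AddCommMonoid M] {e : κ → ι} (he : StrictMono e) (f : κ →₀ M)
    (hf : f.support.Nonempty) :
    (f.mapDomain e).support.min = ↑(e (f.support.min' hf)) := by
  classical
  rw [mapDomain_support_of_injective he.injective, ← Finset.coe_min' (hf.image e),
    Finset.min'_image he.monotone]

theorem Finsupp.max_support_mapDomain_of_strictMono {κ ι M : Type*} [LinearOrder κ]
    [LinearOrder ι] [AddCommMonoid M] {e : κ → ι} (he : StrictMono e) (f : κ →₀ M)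
    (hf : f.support.Nonempty) :
    (f.mapDomain e).support.max = ↑(e (f.support.max' hf)) := by
  classical
  rw [mapDomain_support_of_injective he.injective, ← Finset.coe_max' (hf.image e),
    Finset.max'_image he.monotone]

theorem Finsupp.ne_zero_of_support_min_eq_coe {κ M : Type*} [LinearOrder κ] [Zero M]
    {f : κ →₀ M} {m : κ} (h : f.support.min = m) : f ≠ 0 := by
  rintro rfl
  simp at h

section OrderedOperators

variable {K : Type*} [Field K]

theorem lord_eq_of_min_support_eq {N : OpB K} {m : ℤ} (h : N.support.min = m) : lord K N = m := by
  rw [lord, h, WithTop.untopD_coe]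

theorem hord_eq_of_max_support_eq {N : OpB K} {m : ℤ} (h : N.support.max = m) : hord K N = m := by
  rw [hord, h, WithBot.unbotD_coe]

theorem φB_ιy (lam μ : ℤ) (L : ℤ →₀ Fxy K) :
    φB K lam μ (ιy K L) = L.mapDomain (· * μ) := by
  rw [φB, ιy, ← mapDomain_comp]
  congr 1
  funext j
  simp

/-- `φ_{λ,μ}(S_y^j S_{λ,μ}^k) = S_{λ,μ}^{jμ + k(αλ + βμ)} = S_{λ,μ}^{jμ + k}`. -/
theorem odot_ιy {lam μ α β : ℤ} (hbez : α * lam + β * μ = 1) (L : ℤ →₀ Fxy K)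
    (M : OpB K) :
    odot K α β lam μ (ιy K L) M = skewConvolution (· * μ) (fun j => σv K (0, j)) L M := by
  have hιB : ∀ (p : ℤ × ℤ) (c : Fxy K),
      ((ιB K α β M).sum fun q d => single (p + q) (c * σv K p d))
        = M.sum fun k d => single (p + (k * α, k * β)) (c * σv K p d) := fun p c =>
    sum_mapDomain_index (by simp) (by simp [mul_add, single_add])
  rw [odot, mulA, ιy, sum_mapDomain_index (by simp)
    (by simp [add_mul, single_add, Finsupp.sum, Finset.sum_add_distrib])]
  simp only [hιB]
  simp only [Finsupp.sum, φB, mapDomain_finsetSum, mapDomain_single, skewConvolution]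
  refine Finset.sum_congr rfl fun j _ => Finset.sum_congr rfl fun k _ => ?_
  congr 1
  simp only [Prod.fst_add, Prod.snd_add]
  linear_combination k * hbez

end OrderedOperators

theorem statement3_general (K : Type*) [Field K]
    (lam μ α β : ℤ) (hμ : 0 < μ)
    (hbez : α * lam + β * μ = 1)
    (L : ℤ →₀ Fxy K) (M : OpB K) (hL : L ≠ 0) (hM : M ≠ 0) :
    φB K lam μ (ιy K L) ≠ 0 ∧
      odot K α β lam μ (ιy K L) M ≠ 0 ∧
      lord K (odot K α β lam μ (ιy K L) M) =
        lord K (φB K lam μ (ιy K L)) + lord K M ∧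
      hord K (odot K α β lam μ (ιy K L) M) =
        hord K (φB K lam μ (ιy K L)) + hord K M := by
  have he : StrictMono (· * μ) := strictMono_mul_right_of_pos hμ
  have hLs : L.support.Nonempty := support_nonempty_iff.mpr hL
  have hMs : M.support.Nonempty := support_nonempty_iff.mpr hM
  have hφmin := min_support_mapDomain_of_strictMono he L hLs
  have hφmax := max_support_mapDomain_of_strictMono he L hLs
  have hNmin := min_support_skewConvolution (τ := fun j => σv K (0, j)) he hLs hMs
  have hNmax := max_support_skewConvolution (τ := fun j => σv K (0, j)) he hLs hMs
  rw [φB_ιy, odot_ιy hbez]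
  refine ⟨ne_zero_of_support_min_eq_coe hφmin, ne_zero_of_support_min_eq_coe hNmin, ?_, ?_⟩
  · rw [lord_eq_of_min_support_eq hNmin, lord_eq_of_min_support_eq hφmin,
      lord_eq_of_min_support_eq (Finset.coe_min' hMs).symm]
  · rw [hord_eq_of_max_support_eq hNmax, hord_eq_of_max_support_eq hφmax,
      hord_eq_of_max_support_eq (Finset.coe_max' hMs).symm]

/-- Lemma `LEM:order`.
Let `L ∈ K(x,y)[S_y, S_y⁻¹]` and `M ∈ A_{λ,μ}` be nonzero operators.  Then `φ_{λ,μ}(L)`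
is nonzero, `L ⊙ M` is nonzero, and
`lord(L ⊙ M) = lord(φ_{λ,μ}(L)) + lord(M)` and `hord(L ⊙ M) = hord(φ_{λ,μ}(L)) + hord(M)`. -/
theorem statement3 (K : Type*) [Field K] [CharZero K]
    (lam μ α β : ℤ) (hμ : 0 < μ) (hcop : IsCoprime lam μ)
    (hbez : α * lam + β * μ = 1) (hα : 0 ≤ α ∧ α < μ)
    (hβ : lam ≠ 0 → |β| ≤ |lam|) (hβ0 : lam = 0 → α = 0 ∧ β = 1)
    (L : ℤ →₀ Fxy K) (M : OpB K) (hL : L ≠ 0) (hM : M ≠ 0) :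
    φB K lam μ (ιy K L) ≠ 0 ∧
      odot K α β lam μ (ιy K L) M ≠ 0 ∧
      lord K (odot K α β lam μ (ιy K L) M) =
        lord K (φB K lam μ (ιy K L)) + lord K M ∧
      hord K (odot K α β lam μ (ιy K L) M) =
        hord K (φB K lam μ (ιy K L)) + hord K M :=
  statement3_general K lam μ α β hμ hbez L M hL hM
end

section
/- Let L ∈ K(x,y)[S_y] be nonzero and M ∈ A_{λ,μ}. Then there exist Q, R ∈ A_{λ,μ} such that M = L ⊙ Q + R, and R either is zero or satisfies 0 ≤ lord(R) ≤ hord(R) < hord(φ_{λ,μ}(L)). -/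
open Polynomial BigOperators

/-!
Since `α λ + β μ = 1`, `φ_{λ,μ}` sends `S_y^j S_{λ,μ}^k` to `S_{λ,μ}^{k + jμ}`, so for
`L = Σ_j L_j S_y^j` one gets `L ⊙ (b S_{λ,μ}^k) = Σ_j L_j σ_y^j(b) S_{λ,μ}^{k + jμ}`, and
`hord φ_{λ,μ}(L) = N := μ · max supp L`. A monomial `c S_{λ,μ}^n` with `n ≥ N` is cancelled
by the top term of such a product, one with `n < 0` by its bottom term; as `L` has only
nonnegative powers of `S_y`, the remaining terms lie in `[0, N)` or strictly closer to it.
Induction on `|n|` puts every monomial, hence every `M`, in `L ⊙ A_{λ,μ} + {R : supp R ⊆ [0, N)}`.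
-/
noncomputable section

variable {K : Type*} [Field K]

lemma lord_eq_min' {M : OpB K} (hM : M.support.Nonempty) : lord K M = M.support.min' hM := by
  rw [lord, ← Finset.coe_min' hM, WithTop.untopD_coe]

lemma hord_eq_max' {M : OpB K} (hM : M.support.Nonempty) : hord K M = M.support.max' hM := by
  rw [hord, ← Finset.coe_max' hM, WithBot.unbotD_coe]

lemma lord_le_hord (M : OpB K) : lord K M ≤ hord K M := by
  rcases M.support.eq_empty_or_nonempty with hM | hM
  · simp [lord, hord, hM]
  · rw [lord_eq_min' hM, hord_eq_max' hM]
    exact Finset.min'_le_max' _ hM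

lemma lord_mem_support {M : OpB K} (hM : M ≠ 0) : lord K M ∈ M.support := by
  rw [lord_eq_min' (Finsupp.support_nonempty_iff.mpr hM)]
  exact Finset.min'_mem _ _

lemma hord_mem_support {M : OpB K} (hM : M ≠ 0) : hord K M ∈ M.support := by
  rw [hord_eq_max' (Finsupp.support_nonempty_iff.mpr hM)]
  exact Finset.max'_mem _ _

lemma hord_mapDomain {f : ℤ → ℤ} (hf : StrictMono f) {M : OpB K} (hM : M ≠ 0) :
    hord K (Finsupp.mapDomain f M) = f (hord K M) := by
  have hM' := Finsupp.support_nonempty_iff.mpr hM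
  have hsupp := Finsupp.mapDomain_support_of_injective hf.injective M
  rw [hord_eq_max' hM', hord_eq_max' (hsupp ▸ hM'.image f)]
  simp only [hsupp]
  exact Finset.max'_image hf.monotone _ _

lemma mulA_add_right (L M₁ M₂ : OpA K) :
    mulA K L (M₁ + M₂) = mulA K L M₁ + mulA K L M₂ := by
  simp only [mulA, ← Finsupp.sum_add]
  exact Finsupp.sum_congr fun p _ =>
    Finsupp.sum_add_index' (by simp) fun q b₁ b₂ => by simp [mul_add]

lemma odot_add (α β lam μ : ℤ) (L : OpA K) (M₁ M₂ : OpB K) :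
    odot K α β lam μ L (M₁ + M₂) = odot K α β lam μ L M₁ + odot K α β lam μ L M₂ := by
  simp only [odot, ιB, φB, Finsupp.mapDomain_add, mulA_add_right]

def odotHom (α β lam μ : ℤ) (L : OpA K) : OpB K →+ OpB K :=
  AddMonoidHom.mk' (odot K α β lam μ L) (odot_add α β lam μ L)

lemma mulA_single_right (L : OpA K) (p : ℤ × ℤ) (b : Fxy K) :
    mulA K L (Finsupp.single p b) = L.sum fun q a => Finsupp.single (q + p) (a * σv K q b) := by
  simp only [mulA, Finsupp.sum_single_index, map_zero, mul_zero, Finsupp.single_zero]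

lemma mulA_ιy_single (L : ℤ →₀ Fxy K) (p : ℤ × ℤ) (b : Fxy K) :
    mulA K (ιy K L) (Finsupp.single p b) =
      L.sum fun j a => Finsupp.single ((0, j) + p) (a * (σyF K ^ j) b) := by
  rw [mulA_single_right, ιy, Finsupp.sum_mapDomain_index (by simp) fun _ _ _ => by
    rw [add_mul, Finsupp.single_add]]
  simp [σv]

lemma odot_ιy_single (α β lam μ : ℤ) (hbez : α * lam + β * μ = 1)
    (L : ℤ →₀ Fxy K) (k : ℤ) (b : Fxy K) :
    odot K α β lam μ (ιy K L) (Finsupp.single k b) =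
      ∑ j ∈ L.support, Finsupp.single (k + j * μ) (L j * (σyF K ^ j) b) := by
  rw [odot, ιB, Finsupp.mapDomain_single, mulA_ιy_single, φB, Finsupp.sum,
    Finsupp.mapDomain_finsetSum]
  refine Finset.sum_congr rfl fun j _ => ?_
  rw [Finsupp.mapDomain_single]
  congr 1
  simp only [Prod.fst_add, Prod.snd_add]
  linear_combination k * hbez

def odotRemSubgroup (α β lam μ : ℤ) (L : OpA K) (N : ℤ) : AddSubgroup (OpB K) :=
  (odotHom α β lam μ L).range ⊔ (Finsupp.supported (Fxy K) ℤ (Set.Ico 0 N)).toAddSubgroup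

lemma single_mem_of_erase_mem {α β lam μ : ℤ} (hbez : α * lam + β * μ = 1)
    {L : ℤ →₀ Fxy K} {H : AddSubgroup (OpB K)} (hH : (odotHom α β lam μ (ιy K L)).range ≤ H)
    {j₀ : ℤ} (hj₀ : j₀ ∈ L.support) {n : ℤ}
    (h : ∀ j ∈ L.support.erase j₀, ∀ d, Finsupp.single (n - j₀ * μ + j * μ) d ∈ H)
    (c : Fxy K) : Finsupp.single n c ∈ H := by
  set b := (σyF K ^ j₀).symm (c / L j₀)
  have hlead :
      Finsupp.single (n - j₀ * μ + j₀ * μ) (L j₀ * (σyF K ^ j₀) b) = Finsupp.single n c := by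
    rw [RingEquiv.apply_symm_apply, mul_div_cancel₀ _ (Finsupp.mem_support_iff.mp hj₀),
      sub_add_cancel]
  have hsplit := odot_ιy_single α β lam μ hbez L (n - j₀ * μ) b
  rw [← Finset.add_sum_erase _ _ hj₀, hlead, ← sub_eq_iff_eq_add] at hsplit
  rw [← hsplit]
  exact sub_mem (hH ⟨_, rfl⟩) (sum_mem fun j hj => h j hj _)

lemma hord_φB_ιy (lam : ℤ) {μ : ℤ} (hμ : 0 < μ) {L : ℤ →₀ Fxy K} (hL : L ≠ 0) :
    hord K (φB K lam μ (ιy K L)) = hord K L * μ := by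
  rw [φB, ιy, ← Finsupp.mapDomain_comp]
  simp only [Function.comp_def, zero_mul, zero_add]
  exact hord_mapDomain (f := fun j => j * μ) (fun _ _ h => mul_lt_mul_of_pos_right h hμ) hL

lemma single_mem_odotRemSubgroup {α β lam μ : ℤ} (hμ : 0 < μ) (hbez : α * lam + β * μ = 1)
    {L : ℤ →₀ Fxy K} (hL : L ≠ 0) (hLpoly : ∀ j ∈ L.support, 0 ≤ j) (n : ℤ) (c : Fxy K) :
    Finsupp.single n c ∈ odotRemSubgroup α β lam μ (ιy K L) (hord K L * μ) := by
  have hsupp := Finsupp.support_nonempty_iff.mpr hL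
  have hbounds {j j₀ : ℤ} (hj : j ∈ L.support.erase j₀) :
      L.support.min' hsupp * μ ≤ j * μ ∧ j * μ ≤ hord K L * μ ∧ j * μ ≠ j₀ * μ := by
    have hjL := Finset.mem_of_mem_erase hj
    refine ⟨?_, ?_, fun h => Finset.ne_of_mem_erase hj (mul_right_cancel₀ hμ.ne' h)⟩
    · exact mul_le_mul_of_nonneg_right (Finset.min'_le _ _ hjL) hμ.le
    · rw [hord_eq_max' hsupp]
      exact mul_le_mul_of_nonneg_right (Finset.le_max' _ _ hjL) hμ.le
  have hmin_nonneg : 0 ≤ L.support.min' hsupp * μ :=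
    mul_nonneg (hLpoly _ (Finset.min'_mem _ _)) hμ.le
  induction h : n.natAbs using Nat.strong_induction_on generalizing n c with
  | _ m ih =>
  by_cases hn : n ∈ Set.Ico 0 (hord K L * μ)
  · exact AddSubgroup.mem_sup_right (Finsupp.single_mem_supported ℤ c hn)
  have reduce (i : ℤ) (hi : (0 ≤ i ∧ i < hord K L * μ) ∨ i.natAbs < m) (d : Fxy K) :
      Finsupp.single i d ∈ odotRemSubgroup α β lam μ (ιy K L) (hord K L * μ) := by
    rcases hi with hi | hi
    · exact AddSubgroup.mem_sup_right (Finsupp.single_mem_supported ℤ d hi)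
    · exact ih _ hi i d rfl
  rw [Set.mem_Ico, not_and_or, not_le, not_lt] at hn
  rcases hn with hneg | htop
  · refine single_mem_of_erase_mem hbez le_sup_left (Finset.min'_mem _ hsupp)
      (fun j hj => reduce _ ?_) c
    have := hbounds hj
    omega
  · refine single_mem_of_erase_mem hbez le_sup_left (hord_mem_support hL)
      (fun j hj => reduce _ ?_) c
    have := hbounds hj
    omega

end

theorem statement4_general (K : Type*) [Field K]
    (lam μ α β : ℤ) (hμ : 0 < μ)
    (hbez : α * lam + β * μ = 1)
    (L : ℤ →₀ Fxy K) (hL : L ≠ 0) (hLpoly : ∀ j ∈ L.support, 0 ≤ j)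
    (M : OpB K) :
    ∃ Q R : OpB K,
      M = odot K α β lam μ (ιy K L) Q + R ∧
        (R = 0 ∨
          (0 ≤ lord K R ∧ lord K R ≤ hord K R ∧
            hord K R < hord K (φB K lam μ (ιy K L)))) := by
  have hM : M ∈ odotRemSubgroup α β lam μ (ιy K L) (hord K L * μ) := by
    rw [← M.sum_single]
    exact sum_mem fun n _ => single_mem_odotRemSubgroup hμ hbez hL hLpoly n (M n)
  obtain ⟨_, ⟨Q, rfl⟩, R, hR, hQR⟩ := AddSubgroup.mem_sup.mp hM
  refine ⟨Q, R, hQR.symm, or_iff_not_imp_left.mpr fun hR0 => ?_⟩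
  have hRsupp : ↑R.support ⊆ Set.Ico 0 (hord K L * μ) := (Finsupp.mem_supported ℤ R).mp hR
  rw [hord_φB_ιy lam hμ hL]
  exact ⟨(hRsupp (lord_mem_support hR0)).1, lord_le_hord R, (hRsupp (hord_mem_support hR0)).2⟩

/-- Lemma `LEM:leftquorem`.
Let `L ∈ K(x,y)[S_y]` be nonzero (a nonzero Laurent operator in `S_y` supported on
nonnegative powers) and `M ∈ A_{λ,μ}`.  Then there exist `Q, R ∈ A_{λ,μ}` such that
`M = L ⊙ Q + R`, and `R` either is zero or satisfies
`0 ≤ lord(R) ≤ hord(R) < hord(φ_{λ,μ}(L))`. -/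
theorem statement4 (K : Type*) [Field K] [CharZero K]
    (lam μ α β : ℤ) (hμ : 0 < μ) (hcop : IsCoprime lam μ)
    (hbez : α * lam + β * μ = 1) (hα : 0 ≤ α ∧ α < μ)
    (hβ : lam ≠ 0 → |β| ≤ |lam|) (hβ0 : lam = 0 → α = 0 ∧ β = 1)
    (L : ℤ →₀ Fxy K) (hL : L ≠ 0) (hLpoly : ∀ j ∈ L.support, 0 ≤ j)
    (M : OpB K) :
    ∃ Q R : OpB K,
      M = odot K α β lam μ (ιy K L) Q + R ∧
        (R = 0 ∨
          (0 ≤ lord K R ∧ lord K R ≤ hord K R ∧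
            hord K R < hord K (φB K lam μ (ιy K L)))) :=
  statement4_general K lam μ α β hμ hbez L hL hLpoly M
end

section
/- Let f, g ∈ K[x,y] be nonzero polynomials with deg_y(f) < deg_y(g), and suppose g = g_1^{e_1} ⋯ g_m^{e_m} with positive integers e_i and g_1,…,g_m ∈ K[x,y] pairwise coprime. Then there exist a nonzero u ∈ K[x] and polynomials f_{ij} ∈ K[x,y] for 1 ≤ i ≤ m, 1 ≤ j ≤ e_i, such that f/g = (1/u)(Σ_{i=1}^{m} Σ_{j=1}^{e_i} f_{ij}/g_i^{j}), with deg_x(u) ≤ deg_x(g) deg_y(g) − Σ_{i=1}^{m} (e_i(1+e_i)/2) deg_x(g_i) deg_y(g_i), and for all i, j: deg_x(f_{ij}) ≤ deg_x(g) deg_y(g) + deg_x(f) − deg_x(g) + j·deg_x(g_i) and deg_y(f_{ij}) ≤ deg_y(g_i) − 1. -/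
open Polynomial BigOperators

noncomputable section

variable (K : Type*) [Field K] [CharZero K]

/-- The element `λx + μy` of `K(x,y)`. -/
def wF (lam μ : ℤ) : Fxy K := (lam : Fxy K) * xF K + (μ : Fxy K) * yF K

/-- The rational function `p(λx + μy) ∈ K(x,y)`, for a univariate polynomial `p ∈ K[z]`. -/
def peF (lam μ : ℤ) (p : Polynomial K) : Fxy K := Polynomial.eval₂ (ιK K) (wF K lam μ) p

/-- The element `λx + μy` of `K[x,y]`. -/
def wR (lam μ : ℤ) : Rxy K :=
  (lam : Rxy K) * Polynomial.C Polynomial.X + (μ : Rxy K) * Polynomial.X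

/-- The polynomial `p(λx + μy) ∈ K[x,y]`, for a univariate polynomial `p ∈ K[z]`. -/
def peR (lam μ : ℤ) (p : Polynomial K) : Rxy K :=
  Polynomial.eval₂ (algebraMap K (Rxy K)) (wR K lam μ) p

end

/-!
Write `N = deg_y g` and look for numerators `f_{ij} = Σ_{k < deg_y g_i} c_{ijk} y^k` with
`Σ f_{ij} · g / g_i^{j+1} = u · f`. Comparing the coefficients of `y^0, …, y^{N-1}` gives a square
`N × N` linear system over `K[x]`. Its determinant is nonzero: over the factorial ring `K[x][y]`
the pairwise coprimality of the `g_i` makes such a decomposition with `deg_y f_{ij} < deg_y g_i`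
unique. Take `u` to be this determinant and solve by Cramer's rule. The column of the unknown
`c_{ijk}` holds coefficients of `(g / g_i^{j+1}) y^k`, of `x`-degree at most
`deg_x g - (j+1) deg_x g_i`, so bounding the determinants column by column gives both degree
bounds.
-/

theorem Matrix.natDegree_det_le_sum {n R : Type*} [Fintype n] [DecidableEq n] [CommRing R]
    (M : Matrix n n R[X]) (b : n → ℕ) (h : ∀ s t, (M s t).natDegree ≤ b t) :
    M.det.natDegree ≤ ∑ t, b t := by
  rw [Matrix.det_apply']
  refine natDegree_sum_le_of_forall_le _ _ fun σ _ => natDegree_mul_le.trans ?_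
  rw [natDegree_intCast, zero_add]
  exact (natDegree_prod_le _ _).trans (Finset.sum_le_sum fun t _ => h (σ t) t)

theorem sum_fin_val_add_one_eq (E : ℕ) :
    ∑ j : Fin E, (((j : ℕ) : ℤ) + 1) = E * (1 + E) / 2 := by
  have h : 2 * ∑ j : Fin E, (((j : ℕ) : ℤ) + 1) = E * (1 + E) := by
    induction E with
    | zero => simp
    | succ E ih =>
      rw [Fin.sum_univ_castSucc, mul_add]
      simp only [Fin.val_castSucc, Fin.val_last, ih]
      push_cast
      ring
  omega

theorem Polynomial.Bivariate.coeff_coeff_swap {R : Type*} [CommSemiring R] (r : R[X][X])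
    (d n : ℕ) : ((swap r).coeff d).coeff n = (r.coeff n).coeff d := by
  induction r using Polynomial.induction_on' with
  | add p q hp hq => simp [hp, hq]
  | monomial k a =>
    rw [swap_monomial, coeff_mul_C, coeff_map, coeff_C_mul_X_pow, coeff_monomial]
    split_ifs <;> simp_all [eq_comm]

section DegX

variable {K : Type*} [Field K]

open Polynomial.Bivariate

theorem natDegree_coeff_le_degX (r : Rxy K) (n : ℕ) : (r.coeff n).natDegree ≤ degX K r := by
  by_cases hn : n ∈ r.support
  · exact Finset.le_sup (f := fun n => (r.coeff n).natDegree) hn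
  · simp [notMem_support_iff.mp hn]

theorem degX_le_of_natDegree_coeff_le {r : Rxy K} {B : ℕ}
    (h : ∀ n, (r.coeff n).natDegree ≤ B) : degX K r ≤ B :=
  Finset.sup_le fun n _ => h n

theorem degX_eq_natDegree_swap (r : Rxy K) : degX K r = (swap r).natDegree := by
  refine le_antisymm
    (degX_le_of_natDegree_coeff_le fun n => natDegree_le_iff_coeff_eq_zero.mpr fun d hd => ?_)
    (natDegree_le_iff_coeff_eq_zero.mpr fun d hd => Polynomial.ext fun n => ?_)
  · rw [← coeff_coeff_swap, coeff_eq_zero_of_natDegree_lt hd, coeff_zero]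
  · rw [coeff_coeff_swap, coeff_zero,
      coeff_eq_zero_of_natDegree_lt ((natDegree_coeff_le_degX r n).trans_lt hd)]

theorem degX_mul {a b : Rxy K} (ha : a ≠ 0) (hb : b ≠ 0) :
    degX K (a * b) = degX K a + degX K b := by
  simp only [degX_eq_natDegree_swap, map_mul]
  exact natDegree_mul (by simpa using ha) (by simpa using hb)

theorem degX_pow (a : Rxy K) (k : ℕ) : degX K (a ^ k) = k * degX K a := by
  simp only [degX_eq_natDegree_swap, map_pow, natDegree_pow]

end DegX

noncomputable section

namespace PartialFraction

open Finset

section Cofactor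

variable {M : Type*} {m : ℕ} (e : Fin m → ℕ) (G : Fin m → M)

def cofactor [CommMonoid M] (i : Fin m) (j : Fin (e i)) : M :=
  G i ^ (e i - (j + 1)) * ∏ i' ∈ univ.erase i, G i' ^ e i'

theorem pow_mul_cofactor [CommMonoid M] (i : Fin m) (j : Fin (e i)) :
    G i ^ ((j : ℕ) + 1) * cofactor e G i j = ∏ i', G i' ^ e i' := by
  rw [cofactor, ← mul_assoc, ← pow_add, Nat.add_sub_cancel' j.isLt,
    mul_prod_erase univ (fun i' => G i' ^ e i') (mem_univ i)]

theorem pow_dvd_cofactor_of_ne [CommMonoid M] {i₀ i : Fin m} (h : i ≠ i₀) (j : Fin (e i)) :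
    G i₀ ^ e i₀ ∣ cofactor e G i j :=
  (dvd_prod_of_mem (fun i' => G i' ^ e i') (mem_erase.mpr ⟨h.symm, mem_univ i₀⟩)).mul_left _

variable {e G}

theorem cofactor_ne_zero [CommMonoidWithZero M] [NoZeroDivisors M] [Nontrivial M]
    (hG : ∀ i, G i ≠ 0) (i : Fin m) (j : Fin (e i)) : cofactor e G i j ≠ 0 :=
  mul_ne_zero (pow_ne_zero _ (hG i)) (prod_ne_zero_iff.mpr fun i _ => pow_ne_zero _ (hG i))

end Cofactor

section Uniqueness

variable {R : Type*} [CommRing R] [IsDomain R]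

theorem eq_zero_of_pow_dvd_sum_mul_pow {G : R[X]} (hG : G ≠ 0) :
    ∀ {e : ℕ} {Q : Fin e → R[X]}, (∀ j, (Q j).degree < G.degree) →
      G ^ e ∣ ∑ j, Q j * G ^ (e - (j + 1)) → ∀ j, Q j = 0
  | 0, _, _, _, j => j.elim0
  | e + 1, Q, hQ, hdvd, j => by
    set S := ∑ j : Fin e, Q j.castSucc * G ^ (e - (j + 1))
    have hsum : ∑ j : Fin (e + 1), Q j * G ^ (e + 1 - (j + 1)) = S * G + Q (Fin.last e) := by
      rw [Fin.sum_univ_castSucc, sum_mul]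
      simp only [Fin.val_castSucc, Fin.val_last, Nat.sub_self, pow_zero, mul_one, mul_assoc,
        ← pow_succ]
      congr 2 with j
      rw [Nat.sub_add_comm (Nat.succ_le_of_lt j.isLt)]
    rw [hsum] at hdvd
    have hlast : Q (Fin.last e) = 0 :=
      eq_zero_of_dvd_of_degree_lt ((dvd_add_right (dvd_mul_left G S)).mp
        ((dvd_pow_self G e.succ_ne_zero).trans hdvd)) (hQ _)
    rw [hlast, add_zero, pow_succ, mul_dvd_mul_iff_right hG] at hdvd
    induction j using Fin.lastCases with
    | last => exact hlast
    | cast j => exact eq_zero_of_pow_dvd_sum_mul_pow hG (fun j => hQ _) hdvd j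

theorem eq_zero_of_sum_mul_cofactor_eq_zero [DecompositionMonoid R[X]] {m : ℕ} {e : Fin m → ℕ}
    {G : Fin m → R[X]} (hG : ∀ i, G i ≠ 0) (hcop : Pairwise fun i j => IsRelPrime (G i) (G j))
    {Q : (i : Fin m) → Fin (e i) → R[X]} (hQ : ∀ i j, (Q i j).degree < (G i).degree)
    (h : ∑ i, ∑ j, Q i j * cofactor e G i j = 0) (i₀ : Fin m) : ∀ j, Q i₀ j = 0 := by
  refine eq_zero_of_pow_dvd_sum_mul_pow (hG i₀) (hQ i₀) ?_
  have hcop₀ : IsRelPrime (G i₀ ^ e i₀) (∏ i ∈ univ.erase i₀, G i ^ e i) :=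
    IsRelPrime.prod_right fun i hi => ((hcop (mem_erase.mp hi).1.symm).pow_left).pow_right
  refine hcop₀.dvd_of_dvd_mul_right ?_
  have hsplit : (∑ j, Q i₀ j * G i₀ ^ (e i₀ - (j + 1))) * ∏ i ∈ univ.erase i₀, G i ^ e i
      = -∑ i ∈ univ.erase i₀, ∑ j, Q i j * cofactor e G i j := by
    rw [← add_sum_erase _ _ (mem_univ i₀)] at h
    simp only [cofactor, ← mul_assoc, ← sum_mul] at h ⊢
    exact eq_neg_of_add_eq_zero_left h
  rw [hsplit, dvd_neg]
  exact dvd_sum fun i hi => dvd_sum fun j _ =>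
    (pow_dvd_cofactor_of_ne e G (mem_erase.mp hi).1 j).mul_left _

end Uniqueness

section LinearSystem

variable {R : Type*} [CommRing R] {m : ℕ} (e : Fin m → ℕ) (G : Fin m → R[X])

/-- The unknowns `c_{ijk}`: the coefficient of `y ^ k` in the numerator over `G i ^ (j + 1)`. -/
abbrev Index := Σ i : Fin m, Fin (e i) × Fin (G i).natDegree

def basis (t : Index e G) : R[X] := cofactor e G t.1 t.2.1 * X ^ (t.2.2 : ℕ)

def numerator (c : Index e G → R) (i : Fin m) (j : Fin (e i)) : R[X] :=
  ∑ k : Fin (G i).natDegree, C (c ⟨i, j, k⟩) * X ^ (k : ℕ)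

def matrix : Matrix (Index e G) (Index e G) R :=
  .of fun s t => (basis e G t).coeff (Fintype.equivFin _ s)

variable {e G}

theorem sum_C_mul_basis (c : Index e G → R) :
    ∑ t, C (c t) * basis e G t = ∑ i, ∑ j, numerator e G c i j * cofactor e G i j := by
  rw [← univ_sigma_univ, sum_sigma]
  refine sum_congr rfl fun i _ => ?_
  rw [Fintype.sum_prod_type]
  refine sum_congr rfl fun j _ => ?_
  simp only [numerator, basis, sum_mul]
  exact sum_congr rfl fun k _ => by ring

theorem degree_numerator_lt (c : Index e G → R) (i : Fin m) (j : Fin (e i)) :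
    (numerator e G c i j).degree < (G i).natDegree :=
  degree_sum_fin_lt _

theorem coeff_numerator (c : Index e G → R) (i : Fin m) (j : Fin (e i)) (n : ℕ) :
    (numerator e G c i j).coeff n
      = if h : n < (G i).natDegree then c ⟨i, j, ⟨n, h⟩⟩ else 0 := by
  simp only [numerator, finsetSum_coeff, coeff_C_mul_X_pow]
  split_ifs with h
  · rw [sum_eq_single ⟨n, h⟩ (fun k _ hk => if_neg fun hn => hk (Fin.ext hn.symm)) (by simp)]
    simp
  · exact sum_eq_zero fun k _ => if_neg fun (hn : n = k) => h (hn ▸ k.isLt)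

theorem matrix_mulVec (c : Index e G → R) :
    (matrix e G).mulVec c
      = fun s => (∑ t, C (c t) * basis e G t).coeff (Fintype.equivFin _ s) := by
  ext s
  simp only [Matrix.mulVec, dotProduct, matrix, Matrix.of_apply, finsetSum_coeff, coeff_C_mul]
  exact sum_congr rfl fun t _ => mul_comm _ _

theorem eq_of_coeff_equivFin_eq {ι : Type*} [Fintype ι] {p q : R[X]}
    (hp : p.degree < Fintype.card ι) (hq : q.degree < Fintype.card ι)
    (h : ∀ s, p.coeff (Fintype.equivFin ι s) = q.coeff (Fintype.equivFin ι s)) : p = q := by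
  ext n
  by_cases hn : n < Fintype.card ι
  · simpa using h ((Fintype.equivFin ι).symm ⟨n, hn⟩)
  · rw [coeff_eq_zero_of_degree_lt (hp.trans_le (by exact_mod_cast not_lt.mp hn)),
      coeff_eq_zero_of_degree_lt (hq.trans_le (by exact_mod_cast not_lt.mp hn))]

variable [IsDomain R]

theorem natDegree_cofactor_add (hG : ∀ i, G i ≠ 0) (i : Fin m) (j : Fin (e i)) :
    (cofactor e G i j).natDegree + ((j : ℕ) + 1) * (G i).natDegree
      = (∏ i, G i ^ e i).natDegree := by
  rw [← pow_mul_cofactor e G i j, natDegree_mul (pow_ne_zero _ (hG i)) (cofactor_ne_zero hG i j),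
    natDegree_pow, add_comm]

theorem card_index (hG : ∀ i, G i ≠ 0) :
    Fintype.card (Index e G) = (∏ i, G i ^ e i).natDegree := by
  rw [natDegree_prod _ _ fun i _ => pow_ne_zero _ (hG i)]
  simp [natDegree_pow]

theorem degree_basis_lt (hG : ∀ i, G i ≠ 0) (t : Index e G) :
    (basis e G t).degree < Fintype.card (Index e G) := by
  obtain ⟨i, j, k⟩ := t
  refine degree_le_natDegree.trans_lt (Nat.cast_lt.mpr ?_)
  have hk : (k : ℕ) < ((j : ℕ) + 1) * (G i).natDegree := by nlinarith [k.isLt]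
  calc (basis e G ⟨i, j, k⟩).natDegree ≤ (cofactor e G i j).natDegree + k :=
        natDegree_mul_le.trans (by rw [natDegree_X_pow])
    _ < Fintype.card (Index e G) := by
        rw [card_index hG, ← natDegree_cofactor_add hG i j]; omega

theorem degree_sum_C_mul_basis_lt (hG : ∀ i, G i ≠ 0) (c : Index e G → R) :
    (∑ t, C (c t) * basis e G t).degree < Fintype.card (Index e G) :=
  mem_degreeLT.mp <| Submodule.sum_mem _ fun t _ => by
    rw [← smul_eq_C_mul]
    exact Submodule.smul_mem _ _ (mem_degreeLT.mpr (degree_basis_lt hG t))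

theorem det_matrix_ne_zero [DecompositionMonoid R[X]] (hG : ∀ i, G i ≠ 0)
    (hcop : Pairwise fun i j => IsRelPrime (G i) (G j)) : (matrix e G).det ≠ 0 := by
  intro hdet
  obtain ⟨c, hc, hker⟩ := Matrix.exists_mulVec_eq_zero_iff.mpr hdet
  have hsum : ∑ t, C (c t) * basis e G t = 0 := by
    refine eq_of_coeff_equivFin_eq (degree_sum_C_mul_basis_lt hG c)
      (by rw [degree_zero]; exact WithBot.bot_lt_coe _) fun s => ?_
    simpa [matrix_mulVec] using congrFun hker s
  rw [sum_C_mul_basis] at hsum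
  have hnum := eq_zero_of_sum_mul_cofactor_eq_zero hG hcop
    (fun i j => (degree_numerator_lt c i j).trans_eq (degree_eq_natDegree (hG i)).symm) hsum
  refine hc (funext fun ⟨i, j, k⟩ => ?_)
  simpa [coeff_numerator] using congrArg (coeff · k) (hnum i j)

theorem sum_C_cramer_mul_basis (hG : ∀ i, G i ≠ 0) {f : R[X]}
    (hf : f.degree < (∏ i, G i ^ e i).degree) :
    ∑ t, C ((matrix e G).cramer (fun s => f.coeff (Fintype.equivFin _ s)) t) * basis e G t
      = C (matrix e G).det * f := by
  have hf' : f.degree < Fintype.card (Index e G) := by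
    rwa [card_index hG,
      ← degree_eq_natDegree (prod_ne_zero_iff.mpr fun i _ => pow_ne_zero _ (hG i))]
  refine eq_of_coeff_equivFin_eq (degree_sum_C_mul_basis_lt hG _)
    ((smul_eq_C_mul (R := R) _ ▸ degree_smul_le _ _).trans_lt hf') fun s => ?_
  have hs := congrFun
    (Matrix.mulVec_cramer (matrix e G) fun s => f.coeff (Fintype.equivFin _ s)) s
  rw [matrix_mulVec] at hs
  simpa [coeff_C_mul] using hs

end LinearSystem

theorem div_eq_inv_mul_sum_div {A F : Type*} [CommRing A] [Field F] (φ : A →+* F) {m : ℕ}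
    {e : Fin m → ℕ} {G : Fin m → A} {f u : A} {Q : (i : Fin m) → Fin (e i) → A}
    (hG : φ (∏ i, G i ^ e i) ≠ 0) (hu : φ u ≠ 0)
    (h : ∑ i, ∑ j, Q i j * cofactor e G i j = u * f) :
    φ f / φ (∏ i, G i ^ e i) = (φ u)⁻¹ * ∑ i, ∑ j, φ (Q i j) / φ (G i) ^ ((j : ℕ) + 1) := by
  have hterm : ∀ i j, φ (Q i j) / φ (G i) ^ ((j : ℕ) + 1)
      = φ (Q i j * cofactor e G i j) / φ (∏ i, G i ^ e i) := by
    intro i j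
    have hcof : φ (cofactor e G i j) ≠ 0 :=
      right_ne_zero_of_mul (a := φ (G i ^ ((j : ℕ) + 1))) (by rwa [← map_mul, pow_mul_cofactor])
    rw [← pow_mul_cofactor e G i j, map_mul, map_mul, map_pow, mul_div_mul_right _ _ hcof]
  simp only [hterm, ← sum_div, ← map_sum, h]
  rw [map_mul]
  field_simp

section DegreeBounds

variable {K : Type*} [Field K] {m : ℕ} {e : Fin m → ℕ} {G : Fin m → Rxy K}

theorem natDegree_matrix_le (s t : Index e G) :
    (matrix e G s t).natDegree ≤ degX K (cofactor e G t.1 t.2.1) := by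
  simp only [matrix, Matrix.of_apply, basis, coeff_mul_X_pow']
  split_ifs
  · exact natDegree_coeff_le_degX _ _
  · simp

theorem natDegree_det_matrix_le :
    (matrix e G).det.natDegree ≤ ∑ t : Index e G, degX K (cofactor e G t.1 t.2.1) :=
  Matrix.natDegree_det_le_sum _ _ natDegree_matrix_le

theorem natDegree_cramer_matrix_add_le (f : Rxy K) (t₀ : Index e G) :
    ((matrix e G).cramer (fun s => f.coeff (Fintype.equivFin _ s)) t₀).natDegree
        + degX K (cofactor e G t₀.1 t₀.2.1)
      ≤ ∑ t : Index e G, degX K (cofactor e G t.1 t.2.1) + degX K f := by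
  classical
  set b : Index e G → ℕ := fun t => degX K (cofactor e G t.1 t.2.1)
  have hcol : ∀ s t,
      ((matrix e G).updateCol t₀ (fun s => f.coeff (Fintype.equivFin _ s)) s t).natDegree
        ≤ Function.update b t₀ (degX K f) t := by
    intro s t
    rcases eq_or_ne t t₀ with rfl | ht
    · simpa using natDegree_coeff_le_degX f _
    · simpa [ht] using natDegree_matrix_le s t
  have hdet := Matrix.natDegree_det_le_sum _ _ hcol
  rw [sum_update_of_mem (mem_univ t₀), sdiff_singleton_eq_erase] at hdet
  rw [Matrix.cramer_apply, ← add_sum_erase univ b (mem_univ t₀)]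
  change _ + b t₀ ≤ _
  omega

theorem degX_cofactor_add (hG : ∀ i, G i ≠ 0) (i : Fin m) (j : Fin (e i)) :
    degX K (cofactor e G i j) + ((j : ℕ) + 1) * degX K (G i) = degX K (∏ i, G i ^ e i) := by
  rw [← pow_mul_cofactor e G i j, degX_mul (pow_ne_zero _ (hG i)) (cofactor_ne_zero hG i j),
    degX_pow, add_comm]

theorem sum_degX_cofactor (hG : ∀ i, G i ≠ 0) :
    ∑ t : Index e G, (degX K (cofactor e G t.1 t.2.1) : ℤ)
      = degX K (∏ i, G i ^ e i) * ((∏ i, G i ^ e i).natDegree : ℤ)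
        - ∑ i, ((e i : ℤ) * (1 + (e i : ℤ)) / 2) * (degX K (G i) : ℤ)
            * ((G i).natDegree : ℤ) := by
  have hcof : ∀ i (j : Fin (e i)), (degX K (cofactor e G i j) : ℤ)
      = degX K (∏ i, G i ^ e i) - ((j : ℕ) + 1) * degX K (G i) := by
    intro i j
    have := degX_cofactor_add hG i j
    zify at this
    linarith
  have hN : ((∏ i, G i ^ e i).natDegree : ℤ) = ∑ i, (e i : ℤ) * (G i).natDegree := by
    rw [← card_index hG]
    simp
  simp only [← univ_sigma_univ, sum_sigma, Fintype.sum_prod_type, sum_const, card_univ,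
    Fintype.card_fin, hcof, nsmul_eq_mul, hN, mul_sum, ← sum_fin_val_add_one_eq,
    ← sum_sub_distrib]
  refine sum_congr rfl fun i _ => ?_
  simp only [mul_sub, sum_sub_distrib, sum_const, card_univ, Fintype.card_fin, nsmul_eq_mul,
    ← sum_mul, ← mul_sum]
  ring

theorem sum_degX_cofactor_le (hG : ∀ i, G i ≠ 0) :
    ∑ t : Index e G, degX K (cofactor e G t.1 t.2.1)
      ≤ degX K (∏ i, G i ^ e i) * (∏ i, G i ^ e i).natDegree := by
  have hpos : 0 ≤ ∑ i, ((e i : ℤ) * (1 + (e i : ℤ)) / 2) * (degX K (G i) : ℤ)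
      * ((G i).natDegree : ℤ) := sum_nonneg fun i _ => by positivity
  have := sum_degX_cofactor (e := e) hG
  zify
  linarith

theorem degX_numerator_cramer_le_sub (f : Rxy K) (i : Fin m) (j : Fin (e i)) :
    degX K (numerator e G ((matrix e G).cramer fun s => f.coeff (Fintype.equivFin _ s)) i j)
      ≤ ∑ t : Index e G, degX K (cofactor e G t.1 t.2.1) + degX K f
        - degX K (cofactor e G i j) := by
  refine degX_le_of_natDegree_coeff_le fun n => ?_
  rw [coeff_numerator]
  split_ifs with hn
  · have := natDegree_cramer_matrix_add_le f ⟨i, j, ⟨n, hn⟩⟩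
    dsimp only at this
    omega
  · simp

theorem degX_numerator_cramer_le (hG : ∀ i, G i ≠ 0) {f : Rxy K} (hf : f ≠ 0)
    (hdeg : f.degree < (∏ i, G i ^ e i).degree) (i : Fin m) (j : Fin (e i)) :
    (degX K (numerator e G ((matrix e G).cramer fun s => f.coeff (Fintype.equivFin _ s)) i j) : ℤ)
      ≤ degX K (∏ i, G i ^ e i) * ((∏ i, G i ^ e i).natDegree : ℤ) + degX K f
          - degX K (∏ i, G i ^ e i) + ((j : ℕ) + 1) * degX K (G i) := by
  have hnum := degX_numerator_cramer_le_sub (e := e) (G := G) f i j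
  have hD := sum_degX_cofactor_le (e := e) hG
  have hcof := degX_cofactor_add hG i j
  -- the truncated subtraction in `hnum` only bites when `G i` is constant in `y`
  have hle : degX K (∏ i, G i ^ e i) ≤ degX K (∏ i, G i ^ e i) * (∏ i, G i ^ e i).natDegree :=
    Nat.le_mul_of_pos_right _ (Nat.zero_lt_of_lt (natDegree_lt_natDegree hf hdeg))
  have key :
      degX K (numerator e G ((matrix e G).cramer fun s => f.coeff (Fintype.equivFin _ s)) i j)
        + degX K (∏ i, G i ^ e i)
      ≤ degX K (∏ i, G i ^ e i) * (∏ i, G i ^ e i).natDegree + degX K f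
        + ((j : ℕ) + 1) * degX K (G i) := by
    omega
  linarith

end DegreeBounds

end PartialFraction

end

open PartialFraction

theorem statement11_general (K : Type*) [Field K]
    (f g : Rxy K) (hf : f ≠ 0) (hg : g ≠ 0) (hdeg : f.degree < g.degree)
    (m : ℕ) (e : Fin m → ℕ) (he : ∀ i, 0 < e i) (gi : Fin m → Rxy K)
    (hfac : g = ∏ i, gi i ^ e i)
    (hcop : ∀ i j, i ≠ j → IsRelPrime (gi i) (gi j)) :
    ∃ (u : Polynomial K) (fij : (i : Fin m) → Fin (e i) → Rxy K),
      u ≠ 0 ∧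
      ι₀ K f / ι₀ K g =
        (ιx₀ K u)⁻¹ *
          ∑ i : Fin m, ∑ j : Fin (e i), ι₀ K (fij i j) / ι₀ K (gi i) ^ ((j : ℕ) + 1) ∧
      (u.natDegree : ℤ) ≤
        (degX K g : ℤ) * (g.natDegree : ℤ) -
          ∑ i : Fin m,
            ((e i : ℤ) * (1 + (e i : ℤ)) / 2) * (degX K (gi i) : ℤ) *
              ((gi i).natDegree : ℤ) ∧
      ∀ (i : Fin m) (j : Fin (e i)),
        (degX K (fij i j) : ℤ) ≤
            (degX K g : ℤ) * (g.natDegree : ℤ) + (degX K f : ℤ) - (degX K g : ℤ) +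
              (((j : ℕ) : ℤ) + 1) * (degX K (gi i) : ℤ) ∧
          (fij i j).degree < (gi i).degree := by
  subst hfac
  have hG : ∀ i, gi i ≠ 0 := fun i h0 =>
    hg (Finset.prod_eq_zero (Finset.mem_univ i) (by rw [h0, zero_pow (he i).ne']))
  have hdet : (matrix e gi).det ≠ 0 := det_matrix_ne_zero hG fun i j => hcop i j
  have hsum := sum_C_cramer_mul_basis hG hdeg
  rw [sum_C_mul_basis] at hsum
  have hinj : Function.Injective (ι₀ K) := IsFractionRing.injective _ _
  refine ⟨(matrix e gi).det, numerator e gi _, hdet, ?_, ?_,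
    fun i j => ⟨degX_numerator_cramer_le hG hf hdeg i j, ?_⟩⟩
  · exact div_eq_inv_mul_sum_div (ι₀ K) ((map_ne_zero_iff _ hinj).mpr hg)
      ((map_ne_zero_iff _ hinj).mpr (C_ne_zero.mpr hdet)) hsum
  · rw [← sum_degX_cofactor hG]
    exact_mod_cast natDegree_det_matrix_le
  · exact (degree_numerator_lt _ i j).trans_eq (degree_eq_natDegree (hG i)).symm

/-- Fact `FAC:degreesize` (ii): partial fractions with degree bounds.
Let `f, g ∈ K[x,y]` be nonzero with `deg_y(f) < deg_y(g)`, and suppose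
`g = g_1^{e_1} ⋯ g_m^{e_m}` with `e_i > 0` and the `g_i` pairwise coprime.  Then there
exist a nonzero `u ∈ K[x]` and `f_{ij} ∈ K[x,y]` such that
`f/g = (1/u) Σ_i Σ_{j=1}^{e_i} f_{ij}/g_i^j`, with
`deg_x(u) ≤ deg_x(g) deg_y(g) − Σ_i (e_i(1+e_i)/2) deg_x(g_i) deg_y(g_i)` and, for all
`i, j`, `deg_x(f_{ij}) ≤ deg_x(g) deg_y(g) + deg_x(f) − deg_x(g) + j·deg_x(g_i)` and
`deg_y(f_{ij}) ≤ deg_y(g_i) − 1`. -/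
theorem statement11 (K : Type*) [Field K] [CharZero K]
    (f g : Rxy K) (hf : f ≠ 0) (hg : g ≠ 0) (hdeg : f.degree < g.degree)
    (m : ℕ) (e : Fin m → ℕ) (he : ∀ i, 0 < e i) (gi : Fin m → Rxy K)
    (hfac : g = ∏ i, gi i ^ e i)
    (hcop : ∀ i j, i ≠ j → IsRelPrime (gi i) (gi j)) :
    ∃ (u : Polynomial K) (fij : (i : Fin m) → Fin (e i) → Rxy K),
      u ≠ 0 ∧
      ι₀ K f / ι₀ K g =
        (ιx₀ K u)⁻¹ *
          ∑ i : Fin m, ∑ j : Fin (e i), ι₀ K (fij i j) / ι₀ K (gi i) ^ ((j : ℕ) + 1) ∧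
      (u.natDegree : ℤ) ≤
        (degX K g : ℤ) * (g.natDegree : ℤ) -
          ∑ i : Fin m,
            ((e i : ℤ) * (1 + (e i : ℤ)) / 2) * (degX K (gi i) : ℤ) *
              ((gi i).natDegree : ℤ) ∧
      ∀ (i : Fin m) (j : Fin (e i)),
        (degX K (fij i j) : ℤ) ≤
            (degX K g : ℤ) * (g.natDegree : ℤ) + (degX K f : ℤ) - (degX K g : ℤ) +
              (((j : ℕ) : ℤ) + 1) * (degX K (gi i) : ℤ) ∧
          (fij i j).degree < (gi i).degree :=
  statement11_general K f g hf hg hdeg m e he gi hfac hcop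
end
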